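/- arXiv:gr-qc/0501044 — 5 statements merged into one kernel-verified Lean document; each statement's English description precedes it below -/
import Mathlib

section
/- Let q ≥ 5 and σ > 0, and let S : [0,∞) → ℝ be C¹ with S'(r) ≥ 0 for all r ≥ 0. Suppose w is a C² solution on [0, R̄] of w''(r) + (2/r + α·S'(r))·w'(r) + e^{-α·S(r)}·(e^{-α·S(r)}·w(r)^q - σ) = 0 with w'(0) = 0, w(r) > 0 for 0 ≤ r < R̄, w(R̄) = 0, and α = 1/γ > 0. Then no such R̄ ∈ (0, ∞) exists; i.e., the solution w stays positive for all r ≥ 0. -/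
theorem stmt5 (γ σ p R' : ℝ) (hγ1 : 1 < γ) (hγ : γ ≤ 6 / 5) (hσ : 0 < σ) (hp : 0 < p)
    (q α : ℝ) (hq : q = 1 / (γ - 1)) (hα : α = 1 / γ)
    (S w : ℝ → ℝ) (hS : ContDiff ℝ 1 S) (hS' : ∀ r : ℝ, 0 ≤ r → 0 ≤ deriv S r)
    (hRpos : 0 < R')
    (hw : ContDiffOn ℝ 2 w (Set.Icc 0 R'))
    (hw0 : w 0 = p) (hw'0 : deriv w 0 = 0)
    (hode : ∀ r ∈ Set.Ioo (0:ℝ) R',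
      deriv (deriv w) r + (2 / r + α * deriv S r) * deriv w r
        + Real.exp (-(α * S r)) * (Real.exp (-(α * S r)) * w r ^ q - σ) = 0)
    (hpos : ∀ r : ℝ, 0 ≤ r → r < R' → 0 < w r)
    (hzero : w R' = 0) :
    False := by
  have hR0 : (0:ℝ) ≤ R' := hRpos.le
  have hγpos : (0:ℝ) < γ := by linarith
  have hq5 : (5:ℝ) ≤ q := by
    rw [hq, le_div_iff₀ (by linarith : (0:ℝ) < γ - 1)]; linarith
  have hα0 : 0 < α := by rw [hα]; positivity
  have hq1pos : (0:ℝ) < q + 1 := by linarith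
  have hq1ne : q + 1 ≠ 0 := ne_of_gt hq1pos
  have hSdiff : Differentiable ℝ S := hS.differentiable one_ne_zero
  have hSdC : Continuous (deriv S) := hS.continuous_deriv le_rfl
  have hudiff : UniqueDiffOn ℝ (Set.Icc 0 R') := uniqueDiffOn_Icc hRpos
  set W' : ℝ → ℝ := derivWithin w (Set.Icc 0 R') with hW'def
  have hW'C : ContinuousOn W' (Set.Icc 0 R') :=
    (hw.derivWithin (m := 1) hudiff (by norm_num)).continuousOn
  set g : ℝ → ℝ := fun t => t ^ 3 * Real.exp (α * S t) * deriv S t * (W' t) ^ 2 with hgdef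
  have hgC : ContinuousOn g (Set.Icc 0 R') := by
    apply ContinuousOn.mul
    apply ContinuousOn.mul
    apply ContinuousOn.mul
    · exact (continuous_pow 3).continuousOn
    · exact (Real.continuous_exp.comp (continuous_const.mul hS.continuous)).continuousOn
    · exact hSdC.continuousOn
    · exact hW'C.pow 2
  have hgInt : IntervalIntegrable g MeasureTheory.volume 0 R' := by
    apply ContinuousOn.intervalIntegrable
    rwa [Set.uIcc_of_le hR0]
  set G : ℝ → ℝ := fun x =>
    x ^ 3 * (Real.exp (α * S x) * (W' x) ^ 2 / 2
      + Real.exp (-(α * S x)) * w x ^ (q + 1) / (q + 1) - σ * w x)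
    + x ^ 2 / 2 * Real.exp (α * S x) * w x * W' x
    + α / 2 * ∫ t in (0:ℝ)..x, g t with hGdef
  have hwC : ContinuousOn w (Set.Icc 0 R') := hw.continuousOn
  have hGC : ContinuousOn G (Set.Icc 0 R') := by
    apply ContinuousOn.add
    apply ContinuousOn.add
    · apply ContinuousOn.mul ((continuous_pow 3).continuousOn)
      apply ContinuousOn.sub
      apply ContinuousOn.add
      · exact (((Real.continuous_exp.comp (continuous_const.mul hS.continuous)).continuousOn).mul
          (hW'C.pow 2)).div_const 2
      · refine ContinuousOn.div_const (ContinuousOn.mul ?_ ?_) (q+1)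
        · exact (Real.continuous_exp.comp (continuous_const.mul hS.continuous).neg).continuousOn
        · exact hwC.rpow_const (fun x hx => Or.inr (by positivity))
      · exact continuousOn_const.mul hwC
    · exact ((((continuous_pow 2).continuousOn.div_const 2).mul
        ((Real.continuous_exp.comp (continuous_const.mul hS.continuous)).continuousOn)).mul hwC).mul hW'C
    · refine continuousOn_const.mul ?_
      have := intervalIntegral.continuousOn_primitive_interval
        (f := g) (μ := MeasureTheory.volume) (a := 0) (b := R')
        (by rw [Set.uIcc_of_le hR0]
            exact (intervalIntegrable_iff_integrableOn_Icc_of_le hR0).mp hgInt)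
      rwa [Set.uIcc_of_le hR0] at this
  -- the derivative of G on the open interval
  set Gd : ℝ → ℝ := fun r =>
    r ^ 2 * Real.exp (-(α * S r)) * w r ^ (q + 1) * (3 / (q + 1) - 1 / 2)
    - 5 * σ / 2 * r ^ 2 * w r
    - α * deriv S r * r ^ 3 * Real.exp (-(α * S r)) * w r ^ (q + 1) / (q + 1) with hGddef
  have key : ∀ r ∈ Set.Ioo (0:ℝ) R', HasDerivAt G (Gd r) r := by
    intro r hr
    obtain ⟨hrpos, hrR⟩ := hr
    have hnhd : Set.Icc 0 R' ∈ nhds r := Icc_mem_nhds hrpos hrR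
    have hIoo_nhd : Set.Ioo (0:ℝ) R' ∈ nhds r := Ioo_mem_nhds hrpos hrR
    have hwa : 0 < w r := hpos r hrpos.le hrR
    have hWeq : W' =ᶠ[nhds r] deriv w := by
      filter_upwards [hIoo_nhd] with t ht
      exact derivWithin_of_mem_nhds (Icc_mem_nhds ht.1 ht.2)
    have hca : ContDiffAt ℝ 2 w r := hw.contDiffAt hnhd
    have hw1 : HasDerivAt w (deriv w r) r :=
      (hca.differentiableAt (by norm_num)).hasDerivAt
    -- second derivative
    obtain ⟨u, hu_nhds, hcu⟩ := hca.contDiffOn (le_refl 2) (by simp)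
    have hr_int : r ∈ interior u := mem_interior_iff_mem_nhds.mpr hu_nhds
    have hcu' : ContDiffOn ℝ 2 w (interior u) := hcu.mono interior_subset
    have h2 := (contDiffOn_succ_iff_deriv_of_isOpen (n := 1) isOpen_interior).mp
      (by exact_mod_cast hcu')
    have hw2 : HasDerivAt (deriv w) (deriv (deriv w) r) r :=
      (((h2.2.2.differentiableOn one_ne_zero).differentiableAt
        (isOpen_interior.mem_nhds hr_int))).hasDerivAt
    have hS1 : HasDerivAt S (deriv S r) r := (hSdiff r).hasDerivAt
    have hexp : HasDerivAt (fun t => Real.exp (α * S t))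
        (Real.exp (α * S r) * (α * deriv S r)) r := (hS1.const_mul α).exp
    have hexpneg : HasDerivAt (fun t => Real.exp (-(α * S t)))
        (Real.exp (-(α * S r)) * (-(α * deriv S r))) r := ((hS1.const_mul α).neg).exp
    have hrpow : HasDerivAt (fun t => w t ^ (q + 1))
        (deriv w r * (q + 1) * w r ^ q) r := by
      have := hw1.rpow_const (p := q + 1) (Or.inl hwa.ne')
      simpa using this
    have hW'has : HasDerivAt W' (deriv (deriv w) r) r :=
      hw2.congr_of_eventuallyEq hWeq
    have hW'sq : HasDerivAt (fun t => (W' t) ^ 2)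
        (2 * W' r * deriv (deriv w) r) r := by
      have := hW'has.fun_pow 2
      simpa [mul_comm] using this
    have hpow3 : HasDerivAt (fun t : ℝ => t ^ 3) (3 * r ^ 2) r := by
      simpa using hasDerivAt_pow 3 r
    have hpow2 : HasDerivAt (fun t : ℝ => t ^ 2) (2 * r) r := by
      simpa using hasDerivAt_pow 2 r
    have hInt : HasDerivAt (fun x => ∫ t in (0:ℝ)..x, g t) (g r) r := by
      apply intervalIntegral.integral_hasDerivAt_right
      · exact hgInt.mono_set (by
          rw [Set.uIcc_of_le hR0, Set.uIcc_of_le hrpos.le]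
          exact Set.Icc_subset_Icc le_rfl hrR.le)
      · exact (hgC.mono Set.Ioo_subset_Icc_self).stronglyMeasurableAtFilter
          isOpen_Ioo r ⟨hrpos, hrR⟩
      · exact hgC.continuousAt hnhd
    have hinner : HasDerivAt (fun x => Real.exp (α * S x) * (W' x) ^ 2 / 2
        + Real.exp (-(α * S x)) * w x ^ (q + 1) / (q + 1) - σ * w x)
        ((Real.exp (α * S r) * (α * deriv S r) * (W' r) ^ 2
          + Real.exp (α * S r) * (2 * W' r * deriv (deriv w) r)) / 2
         + (Real.exp (-(α * S r)) * (-(α * deriv S r)) * w r ^ (q + 1)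
          + Real.exp (-(α * S r)) * (deriv w r * (q + 1) * w r ^ q)) / (q + 1)
         - σ * deriv w r) r :=
      (((hexp.mul hW'sq).div_const 2).add
        ((hexpneg.mul hrpow).div_const (q + 1))).sub (hw1.const_mul σ)
    have hterm1 := hpow3.mul hinner
    have hterm2 := (((hpow2.div_const 2).mul hexp).mul hw1).mul hW'has
    have hterm3 := hInt.const_mul (α / 2)
    have hbig := (hterm1.add hterm2).add hterm3
    have hWr : W' r = deriv w r := derivWithin_of_mem_nhds hnhd
    -- the ODE gives the second derivative
    have hc : deriv (deriv w) r =
        -((2 / r + α * deriv S r) * deriv w r)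
        - Real.exp (-(α * S r)) * (Real.exp (-(α * S r)) * w r ^ q - σ) := by
      have := hode r ⟨hrpos, hrR⟩; linarith
    convert hbig using 1
    · rfl
    · rfl
    · rfl
    have hsplit : w r ^ (q + 1) = w r ^ q * w r := by
      rw [Real.rpow_add hwa, Real.rpow_one]
    have hee : Real.exp (-(α * S r)) = (Real.exp (α * S r))⁻¹ := by
      rw [← Real.exp_neg]
    simp only [hGddef, hgdef, Pi.mul_apply]
    rw [hWr, hc, hsplit, hee]
    field_simp
    ring
  -- G is strictly decreasing on [0, R']
  have hanti : StrictAntiOn G (Set.Icc 0 R') := by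
    apply strictAntiOn_of_deriv_neg (convex_Icc 0 R') hGC
    intro x hx
    rw [interior_Icc] at hx
    rw [(key x hx).deriv]
    obtain ⟨hx1, hx2⟩ := hx
    have hwa : 0 < w x := hpos x hx1.le hx2
    have hwp : 0 < w x ^ (q + 1) := Real.rpow_pos_of_pos hwa _
    have h1 : x ^ 2 * Real.exp (-(α * S x)) * w x ^ (q + 1) * (3 / (q + 1) - 1 / 2) ≤ 0 := by
      apply mul_nonpos_of_nonneg_of_nonpos
      · exact le_of_lt (mul_pos (mul_pos (pow_pos hx1 2) (Real.exp_pos _)) hwp)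
      · have : 3 / (q + 1) ≤ 1 / 2 := by
          rw [div_le_div_iff₀ hq1pos (by norm_num)]; linarith
        linarith
    have h2 : 0 < 5 * σ / 2 * x ^ 2 * w x :=
      mul_pos (mul_pos (by positivity) (pow_pos hx1 2)) hwa
    have h3 : 0 ≤ α * deriv S x * x ^ 3 * Real.exp (-(α * S x)) * w x ^ (q + 1) / (q + 1) := by
      have hs := hS' x hx1.le
      apply div_nonneg _ hq1pos.le
      apply mul_nonneg _ hwp.le
      apply mul_nonneg _ (Real.exp_pos _).le
      apply mul_nonneg (mul_nonneg hα0.le hs) (pow_pos hx1 3).le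
    simp only [hGddef]
    linarith
  have hG0 : G 0 = 0 := by
    simp [hGdef, hzero]
  have hGR : 0 ≤ G R' := by
    have hIntNonneg : 0 ≤ ∫ t in (0:ℝ)..R', g t := by
      apply intervalIntegral.integral_nonneg hR0
      intro t ht
      simp only [hgdef]
      exact mul_nonneg (mul_nonneg (mul_nonneg (pow_nonneg ht.1 3)
        (Real.exp_pos _).le) (hS' t ht.1)) (sq_nonneg _)
    have hGRval : G R' = R' ^ 3 * (Real.exp (α * S R') * W' R' ^ 2 / 2)
        + α / 2 * ∫ t in (0:ℝ)..R', g t := by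
      simp only [hGdef]
      rw [hzero, Real.zero_rpow hq1ne]
      ring
    rw [hGRval]
    have hA : 0 ≤ R' ^ 3 * (Real.exp (α * S R') * W' R' ^ 2 / 2) :=
      mul_nonneg (pow_nonneg hR0 3) (by positivity)
    have hB : 0 ≤ α / 2 * ∫ t in (0:ℝ)..R', g t :=
      mul_nonneg (by positivity) hIntNonneg
    linarith
  have := hanti (Set.left_mem_Icc.mpr hR0) (Set.right_mem_Icc.mpr hR0) hRpos
  rw [hG0] at this
  linarith
end

section
/- Let w be a C² solution of w''(r) + (2/r + α·S'(r))·w'(r) + e^{-α·S(r)}·f(r, w(r)) = 0 on (0, R) with w'(0) = 0, where f(r, w) = e^{-α·S(r)}·max(w,0)^q - σ and F(r, w) = ∫₀^w f(r, z) dz. Define G(r) = r³·(e^{α·S(r)}·w'(r)²/2 + F(r, w(r))) + (r²/2)·e^{α·S(r)}·w(r)·w'(r) + (α/2)·∫₀^r t³·e^{α·S(t)}·S'(t)·w'(t)² dt. Then G'(r) = 3r²·(F(r, w(r)) - f(r, w(r))·w(r)/6) + r³·g(r, w(r)), where g(r, w) = ∫₀^w ∂f/∂r(r, z) dz = -(α·S'(r)·e^{-α·S(r)}/(q+1))·max(w,0)^{q+1}.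 -/
open MeasureTheory intervalIntegral Set

private lemma aux_phi_cont (q : ℝ) (hq : 0 < q) :
    Continuous fun z : ℝ => max z 0 ^ q :=
  (continuous_id.max continuous_const).rpow_const fun x => Or.inr hq.le

private lemma aux_M_deriv (q : ℝ) (hq : 1 < q) (y : ℝ) :
    HasDerivAt (fun u : ℝ => ∫ z in (0:ℝ)..u, max z 0 ^ q) (max y 0 ^ q) y := by
  have hc := aux_phi_cont q (by linarith)
  exact intervalIntegral.integral_hasDerivAt_right (hc.intervalIntegrable 0 y)
    (hc.stronglyMeasurableAtFilter _ _) hc.continuousAt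

private lemma aux_M_val (q : ℝ) (hq : 1 < q) (y : ℝ) :
    (∫ z in (0:ℝ)..y, max z 0 ^ q) = max y 0 ^ (q + 1) / (q + 1) := by
  have hq1 : q + 1 ≠ 0 := by linarith
  rcases le_or_gt 0 y with hy | hy
  · have h1 : (∫ z in (0:ℝ)..y, max z 0 ^ q) = ∫ z in (0:ℝ)..y, z ^ q := by
      apply intervalIntegral.integral_congr
      intro z hz
      rw [Set.uIcc_of_le hy] at hz
      simp [max_eq_left hz.1]
    rw [h1, integral_rpow (Or.inl (by linarith)), Real.zero_rpow hq1, max_eq_left hy]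
    ring
  · have h1 : (∫ z in (0:ℝ)..y, max z 0 ^ q) = ∫ z in (0:ℝ)..y, (0:ℝ) := by
      apply intervalIntegral.integral_congr
      intro z hz
      rw [Set.uIcc_of_ge hy.le] at hz
      simp [max_eq_right hz.2, Real.zero_rpow (by linarith : q ≠ 0)]
    rw [h1, max_eq_right hy.le, Real.zero_rpow hq1]
    simp

theorem stmt6 (R α σ q : ℝ) (hα : 0 < α) (hσ : 0 < σ) (hq : 1 < q) (hR : 0 < R)
    (S w : ℝ → ℝ) (hS : ContDiff ℝ 1 S)
    (hw : ContDiffOn ℝ 2 w (Set.Ico 0 R)) (hw'0 : deriv w 0 = 0)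
    (f F g : ℝ → ℝ → ℝ) (G : ℝ → ℝ)
    (hf : ∀ r y : ℝ, f r y = Real.exp (-(α * S r)) * max y 0 ^ q - σ)
    (hF : ∀ r y : ℝ, F r y = ∫ z in (0:ℝ)..y, f r z)
    (hg : ∀ r y : ℝ,
      g r y = -(α * deriv S r * Real.exp (-(α * S r)) / (q + 1)) * max y 0 ^ (q + 1))
    (hG : ∀ r : ℝ, G r =
      r ^ 3 * (Real.exp (α * S r) * (deriv w r) ^ 2 / 2 + F r (w r))
        + r ^ 2 / 2 * Real.exp (α * S r) * w r * deriv w r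
        + α / 2 * ∫ t in (0:ℝ)..r, t ^ 3 * Real.exp (α * S t) * deriv S t * (deriv w t) ^ 2)
    (hode : ∀ r ∈ Set.Ioo (0:ℝ) R,
      deriv (deriv w) r + (2 / r + α * deriv S r) * deriv w r
        + Real.exp (-(α * S r)) * f r (w r) = 0) :
    ∀ r ∈ Set.Ioo (0:ℝ) R,
      HasDerivAt G (3 * r ^ 2 * (F r (w r) - f r (w r) * w r / 6) + r ^ 3 * g r (w r)) r := by
  have hq1 : q + 1 ≠ 0 := by linarith
  -- rewrite F explicitly
  have hFeq : ∀ r y : ℝ, F r y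
      = Real.exp (-(α * S r)) * (∫ z in (0:ℝ)..y, max z 0 ^ q) - σ * y := by
    intro r y
    have hc := aux_phi_cont q (by linarith)
    rw [hF]
    have h1 : (∫ z in (0:ℝ)..y, f r z)
        = ∫ z in (0:ℝ)..y, (Real.exp (-(α * S r)) * max z 0 ^ q - σ) := by
      apply intervalIntegral.integral_congr; intro z _; rw [hf]
    rw [h1, intervalIntegral.integral_sub
        ((hc.intervalIntegrable 0 y).const_mul _)
        (intervalIntegrable_const),
      intervalIntegral.integral_const_mul, intervalIntegral.integral_const]
    simp [mul_comm]
  intro r hr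
  obtain ⟨hr0, hrR⟩ := hr
  have hrne : r ≠ 0 := ne_of_gt hr0
  set o : Set ℝ := Set.Ioo 0 R with ho
  have hopen : IsOpen o := isOpen_Ioo
  have hro : r ∈ o := ⟨hr0, hrR⟩
  have hw2 : ContDiffOn ℝ 2 w o := hw.mono Set.Ioo_subset_Ico_self
  have hd1 : ContDiffOn ℝ 1 (deriv w) o := by
    exact hw2.deriv_of_isOpen hopen (by norm_num)
  have hwdiff : DifferentiableAt ℝ w r :=
    (hw2.differentiableOn (by norm_num)).differentiableAt (hopen.mem_nhds hro)
  have hwd : HasDerivAt w (deriv w r) r := hwdiff.hasDerivAt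
  have hdd : HasDerivAt (deriv w) (deriv (deriv w) r) r :=
    ((hd1.differentiableOn (by norm_num)).differentiableAt (hopen.mem_nhds hro)).hasDerivAt
  -- continuity of the integrand ψ on o
  have hS' : Continuous (deriv S) := hS.continuous_deriv le_rfl
  have hψcont : ContinuousOn
      (fun t : ℝ => t ^ 3 * Real.exp (α * S t) * deriv S t * (deriv w t) ^ 2) o := by
    apply ContinuousOn.mul
    apply ContinuousOn.mul
    apply ContinuousOn.mul
    · exact (continuous_pow 3).continuousOn
    · exact ((Real.continuous_exp.comp ((continuous_const.mul
        (hS.continuous)))).continuousOn)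
    · exact hS'.continuousOn
    · exact (hd1.continuousOn.pow 2)
  -- interval integrability of ψ on [0, r]
  have hint : IntervalIntegrable
      (fun t : ℝ => t ^ 3 * Real.exp (α * S t) * deriv S t * (deriv w t) ^ 2)
      volume 0 r := by
    have hu : ContinuousOn (fun t => derivWithin w (Set.Ico 0 R) t) (Set.Ico 0 R) :=
      hw.continuousOn_derivWithin (uniqueDiffOn_Ico 0 R) (by norm_num)
    have hψ2cont : ContinuousOn
        (fun t : ℝ => t ^ 3 * Real.exp (α * S t) * deriv S t
          * (derivWithin w (Set.Ico 0 R) t) ^ 2) (Set.Icc 0 r) := by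
      apply ContinuousOn.mono _ (Set.Icc_subset_Ico_right hrR)
      apply ContinuousOn.mul
      apply ContinuousOn.mul
      apply ContinuousOn.mul
      · exact (continuous_pow 3).continuousOn
      · exact ((Real.continuous_exp.comp ((continuous_const.mul
          (hS.continuous)))).continuousOn)
      · exact hS'.continuousOn
      · exact hu.pow 2
    have h2 : IntegrableOn
        (fun t : ℝ => t ^ 3 * Real.exp (α * S t) * deriv S t
          * (derivWithin w (Set.Ico 0 R) t) ^ 2) (Set.Ioc 0 r) volume :=
      (hψ2cont.integrableOn_Icc).mono_set Set.Ioc_subset_Icc_self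
    have h3 : IntegrableOn
        (fun t : ℝ => t ^ 3 * Real.exp (α * S t) * deriv S t * (deriv w t) ^ 2)
        (Set.Ioc 0 r) volume := by
      apply h2.congr_fun _ measurableSet_Ioc
      intro t ht
      have hto : t ∈ o := ⟨ht.1, lt_of_le_of_lt ht.2 hrR⟩
      have : derivWithin w (Set.Ico 0 R) t = deriv w t :=
        derivWithin_of_mem_nhds (Filter.mem_of_superset (hopen.mem_nhds hto)
          Set.Ioo_subset_Ico_self)
      simp [this]
    rw [intervalIntegrable_iff, Set.uIoc_of_le hr0.le]
    exact h3
  have hC : HasDerivAt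
      (fun x : ℝ => ∫ t in (0:ℝ)..x, t ^ 3 * Real.exp (α * S t) * deriv S t * (deriv w t) ^ 2)
      (r ^ 3 * Real.exp (α * S r) * deriv S r * (deriv w r) ^ 2) r :=
    intervalIntegral.integral_hasDerivAt_right hint
      (hψcont.stronglyMeasurableAtFilter hopen r hro) (hψcont.continuousAt (hopen.mem_nhds hro))
  -- derivative building blocks
  have hSd : HasDerivAt S (deriv S r) r := ((hS.differentiable (by norm_num)) r).hasDerivAt
  have haS : HasDerivAt (fun x => α * S x) (α * deriv S r) r := hSd.const_mul α
  have hE : HasDerivAt (fun x => Real.exp (α * S x))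
      (Real.exp (α * S r) * (α * deriv S r)) r := haS.exp
  have hEn : HasDerivAt (fun x => Real.exp (-(α * S x)))
      (Real.exp (-(α * S r)) * -(α * deriv S r)) r := haS.neg.exp
  have hMc : HasDerivAt (fun x => ∫ z in (0:ℝ)..(w x), max z 0 ^ q)
      (max (w r) 0 ^ q * deriv w r) r := by
    have := (aux_M_deriv q hq (w r)).comp r hwd
    exact this
  have hd2 : HasDerivAt (fun x => (deriv w x) ^ 2)
      (2 * deriv w r ^ 1 * deriv (deriv w) r) r := hdd.pow 2
  have hx3 : HasDerivAt (fun x : ℝ => x ^ 3) ((3:ℕ) * r ^ 2) r := by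
    simpa using hasDerivAt_pow 3 r
  have hx2 : HasDerivAt (fun x : ℝ => x ^ 2) ((2:ℕ) * r ^ 1) r := by
    simpa using hasDerivAt_pow 2 r
  -- rewrite G
  have hGfun : G = fun x =>
      x ^ 3 * (Real.exp (α * S x) * (deriv w x) ^ 2 / 2
        + (Real.exp (-(α * S x)) * (∫ z in (0:ℝ)..(w x), max z 0 ^ q) - σ * w x))
      + x ^ 2 / 2 * Real.exp (α * S x) * w x * deriv w x
      + α / 2 * ∫ t in (0:ℝ)..x, t ^ 3 * Real.exp (α * S t) * deriv S t * (deriv w t) ^ 2 := by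
    funext x
    rw [hG, hFeq]
  rw [hGfun]
  have hbig :
      HasDerivAt (fun x =>
        x ^ 3 * (Real.exp (α * S x) * (deriv w x) ^ 2 / 2
          + (Real.exp (-(α * S x)) * (∫ z in (0:ℝ)..(w x), max z 0 ^ q) - σ * w x))
        + x ^ 2 / 2 * Real.exp (α * S x) * w x * deriv w x
        + α / 2 * ∫ t in (0:ℝ)..x, t ^ 3 * Real.exp (α * S t) * deriv S t * (deriv w t) ^ 2)
      (((3:ℕ) * r ^ 2) * (Real.exp (α * S r) * (deriv w r) ^ 2 / 2
          + (Real.exp (-(α * S r)) * (∫ z in (0:ℝ)..(w r), max z 0 ^ q) - σ * w r))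
        + r ^ 3 * (((Real.exp (α * S r) * (α * deriv S r)) * (deriv w r) ^ 2
              + Real.exp (α * S r) * (2 * deriv w r ^ 1 * deriv (deriv w) r)) / 2
          + ((Real.exp (-(α * S r)) * -(α * deriv S r)) * (∫ z in (0:ℝ)..(w r), max z 0 ^ q)
              + Real.exp (-(α * S r)) * (max (w r) 0 ^ q * deriv w r)
            - σ * deriv w r))
        + (((((2:ℕ) * r ^ 1) / 2 * Real.exp (α * S r)
              + r ^ 2 / 2 * (Real.exp (α * S r) * (α * deriv S r))) * w r
            + r ^ 2 / 2 * Real.exp (α * S r) * deriv w r) * deriv w r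
          + r ^ 2 / 2 * Real.exp (α * S r) * w r * deriv (deriv w) r)
        + α / 2 * (r ^ 3 * Real.exp (α * S r) * deriv S r * (deriv w r) ^ 2)) r := by
    exact ((hx3.mul (((hE.mul hd2).div_const 2).add
        ((hEn.mul hMc).sub (hwd.const_mul σ)))).add
      ((((hx2.div_const 2).mul hE).mul hwd).mul hdd)).add (hC.const_mul (α / 2))
  convert hbig using 1
  have hodeq := hode r ⟨hr0, hrR⟩
  rw [hf] at hodeq
  have hMval := aux_M_val q hq (w r)
  rw [hFeq, hf, hg, hMval]
  have hw2' : deriv (deriv w) r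
      = -((2 / r + α * deriv S r) * deriv w r
        + Real.exp (-(α * S r)) * (Real.exp (-(α * S r)) * max (w r) 0 ^ q - σ)) := by
    linarith
  rw [hw2', Real.exp_neg]
  have hexp : Real.exp (α * S r) ≠ 0 := Real.exp_ne_zero _
  push_cast
  field_simp
  ring
end

section
/- Let Ω > 0, α > 0, G > 0, and let w be a C² solution on [0, R] of (r²·e^{α·S(r)}·w'(r))' + r²·(4πG·ρ(r) - 2Ω²) = 0 with w'(0) = 0, where ρ is continuous and nonnegative. Define M(r) = ∫₀^r 4π·τ²·ρ(τ) dτ. Then r²·e^{α·S(r)}·w'(r) = (2r³Ω²)/3 - G·M(r) for all r ∈ [0, R]. Consequently, if w'(r) ≤ 0 on [0, R], then M(r) ≥ 2r³Ω²/(3G) for all r ∈ [0, R], and the average density ρ̄(r) = M(r)/((4/3)πr³) satisfies ρ̄(r) ≥ Ω²/(2πG) for all r ∈ (0, R]. -/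
open Real

theorem stmt11 (α Ω G R : ℝ) (hα : 0 < α) (hΩ : 0 < Ω) (hG : 0 < G) (hR : 0 < R)
    (S ρ w : ℝ → ℝ) (hS : ContDiff ℝ 1 S)
    (hρ : ContinuousOn ρ (Set.Icc 0 R))
    (hρ0 : ∀ r ∈ Set.Icc (0:ℝ) R, 0 ≤ ρ r)
    (hw : ContDiffOn ℝ 2 w (Set.Icc 0 R)) (hw'0 : deriv w 0 = 0)
    (hode : ∀ r ∈ Set.Icc (0:ℝ) R,
      HasDerivAt (fun t => t ^ 2 * Real.exp (α * S t) * deriv w t)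
        (-(r ^ 2 * (4 * π * G * ρ r - 2 * Ω ^ 2))) r)
    (M : ℝ → ℝ) (hM : ∀ r : ℝ, M r = ∫ τ in (0:ℝ)..r, 4 * π * τ ^ 2 * ρ τ) :
    (∀ r ∈ Set.Icc (0:ℝ) R,
      r ^ 2 * Real.exp (α * S r) * deriv w r = 2 * r ^ 3 * Ω ^ 2 / 3 - G * M r) ∧
    ((∀ r ∈ Set.Icc (0:ℝ) R, deriv w r ≤ 0) →
      (∀ r ∈ Set.Icc (0:ℝ) R, 2 * r ^ 3 * Ω ^ 2 / (3 * G) ≤ M r) ∧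
      (∀ r ∈ Set.Ioc (0:ℝ) R, Ω ^ 2 / (2 * π * G) ≤ M r / ((4 / 3) * π * r ^ 3))) := by
  -- extend ρ continuously to all of ℝ
  set ρ' : ℝ → ℝ := Set.IccExtend hR.le ((Set.Icc (0:ℝ) R).restrict ρ) with hρ'def
  have hρ'cont : Continuous ρ' := hρ.restrict.Icc_extend'
  have hρ'eq : ∀ x ∈ Set.Icc (0:ℝ) R, ρ' x = ρ x := fun x hx => by
    simp [hρ'def, Set.IccExtend_of_mem hR.le _ hx]
    rfl
  set g : ℝ → ℝ := fun τ => 4 * π * τ ^ 2 * ρ' τ with hgdef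
  have hgcont : Continuous g := by continuity
  set N : ℝ → ℝ := fun r => ∫ τ in (0:ℝ)..r, g τ with hNdef
  have hMN : ∀ r ∈ Set.Icc (0:ℝ) R, M r = N r := by
    intro r hr
    rw [hM r, hNdef]
    apply intervalIntegral.integral_congr
    intro x hx
    have hx' : x ∈ Set.Icc (0:ℝ) R := by
      rcases hr with ⟨hr0, hrR⟩
      rw [Set.uIcc_of_le hr0] at hx
      exact ⟨hx.1, hx.2.trans hrR⟩
    simp only [hgdef, hρ'eq x hx']
  have hN : ∀ r : ℝ, HasDerivAt N (g r) r := fun r =>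
    (hgcont.integral_hasStrictDerivAt 0 r).hasDerivAt
  -- the key identity via eq_of_has_deriv_right_eq
  set F : ℝ → ℝ := fun t => t ^ 2 * Real.exp (α * S t) * deriv w t with hFdef
  set H : ℝ → ℝ := fun t => 2 * t ^ 3 * Ω ^ 2 / 3 - G * N t with hHdef
  have hHderiv : ∀ x ∈ Set.Icc (0:ℝ) R,
      HasDerivAt H (-(x ^ 2 * (4 * π * G * ρ x - 2 * Ω ^ 2))) x := by
    intro x hx
    have h1 : HasDerivAt (fun t : ℝ => 2 * t ^ 3 * Ω ^ 2 / 3) (2 * x ^ 2 * Ω ^ 2) x := by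
      have := ((hasDerivAt_pow 3 x).const_mul 2)
      have h2 := (this.mul_const (Ω ^ 2)).div_const 3
      refine h2.congr_deriv ?_
      ring
    have h3 := h1.sub ((hN x).const_mul G)
    refine h3.congr_deriv ?_
    rw [hgdef]
    simp only [hρ'eq x hx]
    ring
  have key : ∀ r ∈ Set.Icc (0:ℝ) R, F r = H r := by
    apply eq_of_has_deriv_right_eq
      (f' := fun x => -(x ^ 2 * (4 * π * G * ρ x - 2 * Ω ^ 2)))
    · intro x hx
      exact (hode x ⟨hx.1, hx.2.le⟩).hasDerivWithinAt
    · intro x hx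
      exact (hHderiv x ⟨hx.1, hx.2.le⟩).hasDerivWithinAt
    · intro x hx
      exact (hode x hx).continuousAt.continuousWithinAt
    · intro x hx
      exact (hHderiv x hx).continuousAt.continuousWithinAt
    · simp [hFdef, hHdef, hNdef]
  have part1 : ∀ r ∈ Set.Icc (0:ℝ) R,
      r ^ 2 * Real.exp (α * S r) * deriv w r = 2 * r ^ 3 * Ω ^ 2 / 3 - G * M r := by
    intro r hr
    rw [hMN r hr]
    exact key r hr
  refine ⟨part1, fun hw' => ?_⟩
  have part2 : ∀ r ∈ Set.Icc (0:ℝ) R, 2 * r ^ 3 * Ω ^ 2 / (3 * G) ≤ M r := by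
    intro r hr
    have h1 := part1 r hr
    have h2 : r ^ 2 * Real.exp (α * S r) * deriv w r ≤ 0 := by
      apply mul_nonpos_of_nonneg_of_nonpos
      · positivity
      · exact hw' r hr
    rw [h1] at h2
    rw [div_le_iff₀ (by positivity)]
    linarith
  refine ⟨part2, fun r hr => ?_⟩
  have hr' : r ∈ Set.Icc (0:ℝ) R := ⟨hr.1.le, hr.2⟩
  have hrpos : 0 < r := hr.1
  have h2 := part2 r hr'
  rw [div_le_iff₀ (by positivity)] at h2
  rw [div_le_div_iff₀ (by positivity) (by positivity)]
  nlinarith [mul_nonneg pi_pos.le (sub_nonneg.2 h2)]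
end

section
/- Let 1 < q < 5 and σ > 0, and set p̄ = (5σ(1+q)/(5-q))^{1/q}. Let 0 < p < p̄ and let w solve w''(r) + (2/r)·w'(r) + w(r)^q - σ = 0 on [0, ∞) with w(0) = p, w'(0) = 0. Then there is no R > 0 with w(r) > 0 for 0 ≤ r < R and w(R) = 0; i.e., w never reaches zero. -/
theorem stmt13 (q σ p : ℝ) (hq1 : 1 < q) (hq5 : q < 5) (hσ : 0 < σ)
    (hp : 0 < p) (hpp : p < (5 * σ * (1 + q) / (5 - q)) ^ (1 / q))
    (w : ℝ → ℝ) (hw : ContDiff ℝ 2 w) (hw0 : w 0 = p) (hw'0 : deriv w 0 = 0)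
    (hode : ∀ r > (0:ℝ), deriv (deriv w) r + (2 / r) * deriv w r + w r ^ q - σ = 0) :
    ¬ ∃ R > (0:ℝ), (∀ r : ℝ, 0 ≤ r → r < R → 0 < w r) ∧ w R = 0 := by
  rintro ⟨R, hR, hpos, hwR⟩
  have hq0 : 0 < q := by linarith
  have h5q : (0:ℝ) < 5 - q := by linarith
  have hq1' : (0:ℝ) < q + 1 := by linarith
  have hq1ne : q + 1 ≠ 0 := ne_of_gt hq1'
  set s : ℝ := 5 * σ * (1 + q) / (5 - q) with hsdef
  set pb : ℝ := s ^ (1 / q) with hpbdef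
  have hs : 0 < s := by
    rw [hsdef]; apply div_pos (by nlinarith) h5q
  have hpb : 0 < pb := Real.rpow_pos_of_pos hs _
  have hpbq : pb ^ q = s := by
    rw [hpbdef, ← Real.rpow_mul hs.le, one_div, inv_mul_cancel₀ (ne_of_gt hq0),
      Real.rpow_one]
  have hσs : σ < s := by
    rw [hsdef, lt_div_iff₀ h5q]; nlinarith
  -- the potential F
  set F : ℝ → ℝ := fun x => x ^ (q + 1) / (q + 1) - σ * x with hFdef
  have hF : ∀ x : ℝ, HasDerivAt F (x ^ q - σ) x := by
    intro x
    have h1 : HasDerivAt (fun y : ℝ => y ^ (q + 1)) ((q + 1) * x ^ (q + 1 - 1)) x :=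
      Real.hasDerivAt_rpow_const (Or.inr (by linarith))
    have e : q + 1 - 1 = q := by ring
    rw [e] at h1
    have h2 := (h1.div_const (q + 1)).sub ((hasDerivAt_id x).const_mul σ)
    refine h2.congr_deriv ?_
    rw [mul_div_cancel_left₀ _ hq1ne]; ring
  have hFd : Differentiable ℝ F := fun x => (hF x).differentiableAt
  have hFc : Continuous F := hFd.continuous
  have hF0 : F 0 = 0 := by
    rw [hFdef]; simp [Real.zero_rpow hq1ne]
  have hFpb : 0 < F pb := by
    have h1 : pb ^ (q + 1) = s * pb := by
      rw [Real.rpow_add hpb, Real.rpow_one, hpbq]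
    have h2 : F pb = pb * (s / (q + 1) - σ) := by
      rw [hFdef]; simp only; rw [h1]; ring
    have h3 : σ < s / (q + 1) := by
      rw [hsdef]
      rw [div_div, lt_div_iff₀ (by positivity)]
      nlinarith [mul_pos (mul_pos hσ hq1') hq0]
    rw [h2]
    exact mul_pos hpb (by linarith)
  -- F p < F pb
  set s0 : ℝ := σ ^ (1 / q) with hs0def
  have hs0 : 0 < s0 := Real.rpow_pos_of_pos hσ _
  have hs0q : s0 ^ q = σ := by
    rw [hs0def, ← Real.rpow_mul hσ.le, one_div, inv_mul_cancel₀ (ne_of_gt hq0),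
      Real.rpow_one]
  have hs0pb : s0 < pb := by
    by_contra hcon
    push_neg at hcon
    have := Real.rpow_le_rpow hpb.le hcon hq0.le
    rw [hpbq, hs0q] at this
    linarith
  have hanti : StrictAntiOn F (Set.Icc 0 s0) := by
    apply strictAntiOn_of_deriv_neg (convex_Icc _ _) hFc.continuousOn
    intro x hx
    rw [interior_Icc] at hx
    rw [(hF x).deriv]
    have : x ^ q < σ := by
      rw [← hs0q]; exact Real.rpow_lt_rpow hx.1.le hx.2 hq0
    linarith
  have hmono : StrictMonoOn F (Set.Ici s0) := by
    apply strictMonoOn_of_deriv_pos (convex_Ici _) hFc.continuousOn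
    intro x hx
    rw [interior_Ici] at hx
    rw [(hF x).deriv]
    have : σ < x ^ q := by
      rw [← hs0q]; exact Real.rpow_lt_rpow hs0.le hx hq0
    linarith
  have hFp : F p < F pb := by
    rcases le_or_gt p s0 with h | h
    · have h0 : F p < F 0 := hanti ⟨le_rfl, hs0.le⟩ ⟨hp.le, h⟩ hp
      rw [hF0] at h0
      linarith
    · exact hmono (Set.mem_Ici.mpr h.le) (Set.mem_Ici.mpr hs0pb.le) hpp
  -- regularity of w
  have hwd : Differentiable ℝ w := hw.differentiable (by norm_num)
  have hwc : Continuous w := hwd.continuous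
  have hw1 : ContDiff ℝ 1 (deriv w) := by
    have hw' : ContDiff ℝ ((1:ℕ) + 1) w := by exact_mod_cast hw
    rw [contDiff_succ_iff_deriv] at hw'
    exact_mod_cast hw'.2.2
  have hwd2 : Differentiable ℝ (deriv w) := hw1.differentiable one_ne_zero
  have hw'c : Continuous (deriv w) := hwd2.continuous
  -- the energy E
  set E : ℝ → ℝ := fun r => (deriv w r) ^ 2 / 2 + F (w r) with hEdef
  have hEc : Continuous E := ((hw'c.pow 2).div_const 2).add (hFc.comp hwc)
  have hE : ∀ r : ℝ, HasDerivAt E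
      (deriv w r * deriv (deriv w) r + (w r ^ q - σ) * deriv w r) r := by
    intro r
    have d1 : HasDerivAt w (deriv w r) r := (hwd r).hasDerivAt
    have d2 : HasDerivAt (deriv w) (deriv (deriv w) r) r := (hwd2 r).hasDerivAt
    have h1 : HasDerivAt (fun r => (deriv w r) ^ 2 / 2)
        (deriv w r * deriv (deriv w) r) r := by
      have := (d2.pow 2).div_const 2
      refine this.congr_deriv ?_
      simp; ring
    have h2 : HasDerivAt (fun r => F (w r)) ((w r ^ q - σ) * deriv w r) r :=
      (hF (w r)).comp r d1
    exact h1.add h2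
  have hE' : ∀ r ∈ Set.Ioo (0:ℝ) R,
      HasDerivAt E (-(2 / r) * (deriv w r) ^ 2) r := by
    intro r hr
    have h := hE r
    have h0 := hode r hr.1
    have heq : deriv w r * deriv (deriv w) r + (w r ^ q - σ) * deriv w r
        = -(2 / r) * (deriv w r) ^ 2 := by
      linear_combination (deriv w r) * h0
    rwa [heq] at h
  have hEanti : AntitoneOn E (Set.Icc 0 R) := by
    apply antitoneOn_of_deriv_nonpos (convex_Icc _ _) hEc.continuousOn
    · intro x _
      exact (hE x).differentiableAt.differentiableWithinAt
    · intro x hx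
      rw [interior_Icc] at hx
      rw [(hE' x hx).deriv]
      have hx0 : 0 < x := hx.1
      have : 0 ≤ 2 / x * (deriv w x) ^ 2 := by positivity
      linarith
  -- w stays below pb
  have hE0 : E 0 = F p := by rw [hEdef]; simp [hw'0, hw0]
  have hwlt : ∀ r ∈ Set.Icc (0:ℝ) R, w r < pb := by
    by_contra hcon
    push_neg at hcon
    obtain ⟨r0, hr0, hge⟩ := hcon
    have hsub : Set.Icc (w 0) (w r0) ⊆ w '' Set.Icc 0 r0 :=
      intermediate_value_Icc hr0.1 hwc.continuousOn
    have hmem : pb ∈ Set.Icc (w 0) (w r0) := ⟨by rw [hw0]; exact hpp.le, hge⟩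
    obtain ⟨r1, hr1, hwr1⟩ := hsub hmem
    have hr1R : r1 ∈ Set.Icc (0:ℝ) R := ⟨hr1.1, le_trans hr1.2 hr0.2⟩
    have h1 : E r1 ≤ E 0 := hEanti ⟨le_rfl, hR.le⟩ hr1R hr1.1
    have hEr1 : F pb ≤ E r1 := by
      rw [hEdef]; simp only; rw [hwr1]
      nlinarith [sq_nonneg (deriv w r1)]
    rw [hE0] at h1
    linarith
  -- the Pohozaev-type function G
  set G : ℝ → ℝ := fun r => r ^ 3 * E r + r ^ 2 / 2 * (w r * deriv w r) with hGdef
  have hGc : Continuous G := by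
    rw [hGdef]
    exact ((continuous_pow 3).mul hEc).add
      (((continuous_pow 2).div_const 2).mul (hwc.mul hw'c))
  have hG : ∀ r ∈ Set.Ioo (0:ℝ) R, HasDerivAt G
      (3 * r ^ 2 * (F (w r) - w r * (w r ^ q - σ) / 6)) r := by
    intro r hr
    have hrne : r ≠ 0 := ne_of_gt hr.1
    have d1 : HasDerivAt w (deriv w r) r := (hwd r).hasDerivAt
    have d2 : HasDerivAt (deriv w) (deriv (deriv w) r) r := (hwd2 r).hasDerivAt
    have hr3 : HasDerivAt (fun x : ℝ => x ^ 3) (3 * r ^ 2) r := by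
      simpa using hasDerivAt_pow 3 r
    have hr2 : HasDerivAt (fun x : ℝ => x ^ 2 / 2) r r := by
      simpa using (hasDerivAt_pow 2 r).div_const 2
    have h1 := hr3.mul (hE r)
    have h2 := hr2.mul (d1.mul d2)
    have h3 := h1.add h2
    rw [hGdef]
    refine h3.congr_deriv ?_
    have h0 := hode r hr.1
    have hque : r * deriv (deriv w) r + 2 * deriv w r + r * (w r ^ q - σ) = 0 := by
      field_simp at h0
      linarith
    simp only [hEdef, Pi.mul_apply]
    linear_combination ((r ^ 2 * deriv w r) + r / 2 * w r) * hque
  have hneg : ∀ x ∈ Set.Ioo (0:ℝ) R,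
      3 * x ^ 2 * (F (w x) - w x * (w x ^ q - σ) / 6) < 0 := by
    intro x hx
    have ha1 : 0 < w x := hpos x hx.1.le hx.2
    have ha2 : w x < pb := hwlt x ⟨hx.1.le, hx.2.le⟩
    have hb1 : w x ^ q < s := by
      rw [← hpbq]; exact Real.rpow_lt_rpow ha1.le ha2 hq0
    have hb0 : 0 < w x ^ q := Real.rpow_pos_of_pos ha1 _
    have h2 : w x ^ (q + 1) = w x ^ q * w x := by
      rw [Real.rpow_add ha1, Real.rpow_one]
    have hbs : w x ^ q * (5 - q) < 5 * σ * (1 + q) := by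
      rw [hsdef, lt_div_iff₀ h5q] at hb1
      linarith
    have hkey : w x ^ q / (q + 1) - σ - (w x ^ q - σ) / 6 < 0 := by
      rw [show w x ^ q / (q + 1) - σ - (w x ^ q - σ) / 6
          = (w x ^ q * (5 - q) - 5 * σ * (1 + q)) / (6 * (q + 1)) from by
        field_simp; ring]
      apply div_neg_of_neg_of_pos (by linarith) (by linarith)
    have hFx : F (w x) - w x * (w x ^ q - σ) / 6
        = w x * (w x ^ q / (q + 1) - σ - (w x ^ q - σ) / 6) := by
      rw [hFdef]; simp only; rw [h2]; ring
    rw [hFx]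
    have := mul_neg_of_pos_of_neg ha1 hkey
    have hx0 : 0 < x := hx.1
    have h3 : (0:ℝ) < 3 * x ^ 2 := by positivity
    exact mul_neg_of_pos_of_neg h3 this
  have hGanti : StrictAntiOn G (Set.Icc 0 R) := by
    apply strictAntiOn_of_deriv_neg (convex_Icc _ _) hGc.continuousOn
    intro x hx
    rw [interior_Icc] at hx
    rw [(hG x hx).deriv]
    exact hneg x hx
  have hG0 : G 0 = 0 := by rw [hGdef]; simp
  have hGR : G R = R ^ 3 * ((deriv w R) ^ 2 / 2) := by
    rw [hGdef]; simp only [hEdef]; rw [hwR, hF0]; ring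
  have hlt : G R < G 0 := hGanti ⟨le_rfl, hR.le⟩ ⟨hR.le, le_rfl⟩ hR
  rw [hG0, hGR] at hlt
  have : 0 ≤ R ^ 3 * ((deriv w R) ^ 2 / 2) := by positivity
  linarith
end

section
/- Let q > 1 and σ₁ > σ₂ > 0. For i = 1, 2, let wᵢ solve wᵢ''(r) + (2/r)·wᵢ'(r) + wᵢ(r)^q - σᵢ = 0 with wᵢ(0) = p > 0, wᵢ'(0) = 0, and suppose both w₁ and w₂ are positive and strictly decreasing on (0, r₀] with w₁(r) > w₂(r) for 0 < r < r₀ and w₁(r₀) = w₂(r₀). Then a contradiction follows; i.e., no such r₀ > 0 exists. -/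
open Set

lemma rpow_slope_bounds {q a b : ℝ} (hq : 1 < q) (hb : 0 < b) (hab : b < a) :
    q * b ^ (q-1) * (a - b) ≤ a ^ q - b ^ q ∧ a ^ q - b ^ q ≤ q * a ^ (q-1) * (a - b) := by
  have hcont : ContinuousOn (fun x : ℝ => x ^ q) (Icc b a) :=
    (continuous_id.rpow_const fun x => Or.inr (by linarith)).continuousOn
  obtain ⟨c, hc, hceq⟩ := exists_hasDerivAt_eq_slope (fun x : ℝ => x ^ q)
    (fun x : ℝ => q * x ^ (q-1)) hab hcont
    (fun x _ => Real.hasDerivAt_rpow_const (Or.inr hq.le))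
  have hcb : b ≤ c := hc.1.le
  have hca : c ≤ a := hc.2.le
  have h1 : b ^ (q-1) ≤ c ^ (q-1) := Real.rpow_le_rpow hb.le hcb (by linarith)
  have h2 : c ^ (q-1) ≤ a ^ (q-1) := Real.rpow_le_rpow (by linarith) hca (by linarith)
  have hqpos : (0:ℝ) < q := by linarith
  have habpos : (0:ℝ) < a - b := by linarith
  have hslope : a ^ q - b ^ q = q * c ^ (q-1) * (a - b) := by
    have := (div_eq_iff (by linarith : a - b ≠ 0)).mp hceq.symm
    linarith
  constructor
  · rw [hslope]
    have := mul_le_mul_of_nonneg_right (mul_le_mul_of_nonneg_left h1 hqpos.le) habpos.le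
    linarith
  · rw [hslope]
    have := mul_le_mul_of_nonneg_right (mul_le_mul_of_nonneg_left h2 hqpos.le) habpos.le
    linarith

set_option maxHeartbeats 1000000 in
theorem stmt14 (q σ₁ σ₂ p r₀ : ℝ) (hq : 1 < q) (h12 : σ₂ < σ₁) (h2 : 0 < σ₂)
    (hp : 0 < p) (hr₀ : 0 < r₀)
    (w₁ w₂ : ℝ → ℝ) (hw₁ : ContDiff ℝ 2 w₁) (hw₂ : ContDiff ℝ 2 w₂)
    (h10 : w₁ 0 = p) (h20 : w₂ 0 = p) (h1'0 : deriv w₁ 0 = 0) (h2'0 : deriv w₂ 0 = 0)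
    (hode1 : ∀ r > (0:ℝ), deriv (deriv w₁) r + (2 / r) * deriv w₁ r + w₁ r ^ q - σ₁ = 0)
    (hode2 : ∀ r > (0:ℝ), deriv (deriv w₂) r + (2 / r) * deriv w₂ r + w₂ r ^ q - σ₂ = 0)
    (hpos1 : ∀ r ∈ Set.Ioc (0:ℝ) r₀, 0 < w₁ r) (hpos2 : ∀ r ∈ Set.Ioc (0:ℝ) r₀, 0 < w₂ r)
    (hdec1 : ∀ r ∈ Set.Ioc (0:ℝ) r₀, deriv w₁ r < 0)
    (hdec2 : ∀ r ∈ Set.Ioc (0:ℝ) r₀, deriv w₂ r < 0)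
    (hgt : ∀ r ∈ Set.Ioo (0:ℝ) r₀, w₂ r < w₁ r) (heq : w₁ r₀ = w₂ r₀) :
    False := by
  -- basic differentiability
  have hd1 : Differentiable ℝ w₁ := hw₁.differentiable (by norm_num)
  have hd2 : Differentiable ℝ w₂ := hw₂.differentiable (by norm_num)
  have h2e : (2 : WithTop ℕ∞) = 1 + 1 := by norm_num
  have hc1 : ContDiff ℝ 1 (deriv w₁) := (contDiff_succ_iff_deriv.mp (h2e ▸ hw₁)).2.2
  have hc2 : ContDiff ℝ 1 (deriv w₂) := (contDiff_succ_iff_deriv.mp (h2e ▸ hw₂)).2.2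
  have hdd1 : Differentiable ℝ (deriv w₁) := hc1.differentiable one_ne_zero
  have hdd2 : Differentiable ℝ (deriv w₂) := hc2.differentiable one_ne_zero
  set y : ℝ → ℝ := fun r => w₁ r - w₂ r with hy_def
  set y' : ℝ → ℝ := fun r => deriv w₁ r - deriv w₂ r with hy'_def
  have hyd : ∀ r, HasDerivAt y (y' r) r := fun r => ((hd1 r).hasDerivAt).sub ((hd2 r).hasDerivAt)
  have hy'd : ∀ r, HasDerivAt y' (deriv (deriv w₁) r - deriv (deriv w₂) r) r :=
    fun r => ((hdd1 r).hasDerivAt).sub ((hdd2 r).hasDerivAt)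
  set G : ℝ → ℝ := fun r =>
    (y' r) ^ 2 / 2 + (w₁ r ^ q - w₂ r ^ q) * y r / 2 - (σ₁ - σ₂) * y r with hG_def
  -- the derivative of G
  set E : ℝ → ℝ := fun r =>
    (2 * y' r ^ 1 * (deriv (deriv w₁) r - deriv (deriv w₂) r)) / 2 +
      ((deriv w₁ r * q * w₁ r ^ (q - 1) - deriv w₂ r * q * w₂ r ^ (q - 1)) * y r
        + (w₁ r ^ q - w₂ r ^ q) * y' r) / 2 - (σ₁ - σ₂) * y' r with hE_def
  have hGd : ∀ r, HasDerivAt G (E r) r := by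
    intro r
    have hA : HasDerivAt (fun s => (y' s) ^ 2 / 2)
        ((2 * y' r ^ 1 * (deriv (deriv w₁) r - deriv (deriv w₂) r)) / 2) r :=
      ((hy'd r).pow 2).div_const 2
    have h1q : HasDerivAt (fun s => w₁ s ^ q) (deriv w₁ r * q * w₁ r ^ (q - 1)) r :=
      ((hd1 r).hasDerivAt).rpow_const (Or.inr hq.le)
    have h2q : HasDerivAt (fun s => w₂ s ^ q) (deriv w₂ r * q * w₂ r ^ (q - 1)) r :=
      ((hd2 r).hasDerivAt).rpow_const (Or.inr hq.le)
    have hB : HasDerivAt (fun s => (w₁ s ^ q - w₂ s ^ q) * y s / 2)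
        (((deriv w₁ r * q * w₁ r ^ (q - 1) - deriv w₂ r * q * w₂ r ^ (q - 1)) * y r
          + (w₁ r ^ q - w₂ r ^ q) * y' r) / 2) r :=
      ((h1q.sub h2q).mul (hyd r)).div_const 2
    have hC : HasDerivAt (fun s => (σ₁ - σ₂) * y s) ((σ₁ - σ₂) * y' r) r :=
      (hyd r).const_mul _
    exact (hA.add hB).sub hC
  -- G is continuous
  have hGcont : Continuous G := by
    have hyc : Continuous y := (hd1.continuous).sub (hd2.continuous)
    have hy'c : Continuous y' := (hc1.continuous).sub (hc2.continuous)
    have h1c : Continuous fun r => w₁ r ^ q :=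
      hd1.continuous.rpow_const fun x => Or.inr (by linarith)
    have h2c : Continuous fun r => w₂ r ^ q :=
      hd2.continuous.rpow_const fun x => Or.inr (by linarith)
    exact (((hy'c.pow 2).div_const 2).add (((h1c.sub h2c).mul hyc).div_const 2)).sub
      (continuous_const.mul hyc)
  -- the key sign estimate on the derivative
  have hEle : ∀ r ∈ Ioo (0:ℝ) r₀, E r ≤ -(2 / r) * (y' r) ^ 2 := by
    intro r hr
    have hrpos : 0 < r := hr.1
    have hrIoc : r ∈ Ioc (0:ℝ) r₀ := ⟨hr.1, hr.2.le⟩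
    have ha := hpos1 r hrIoc
    have hb := hpos2 r hrIoc
    have hba := hgt r hr
    have ha' := hdec1 r hrIoc
    have hb' := hdec2 r hrIoc
    have o1 := hode1 r hrpos
    have o2 := hode2 r hrpos
    obtain ⟨K1, K2⟩ := rpow_slope_bounds hq hb hba
    -- abbreviations
    have hdd1e : deriv (deriv w₁) r = σ₁ - (2 / r) * deriv w₁ r - w₁ r ^ q := by linarith
    have hdd2e : deriv (deriv w₂) r = σ₂ - (2 / r) * deriv w₂ r - w₂ r ^ q := by linarith
    have hkey : q * (w₁ r ^ (q-1) * deriv w₁ r - w₂ r ^ (q-1) * deriv w₂ r) * (w₁ r - w₂ r)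
        ≤ (w₁ r ^ q - w₂ r ^ q) * (deriv w₁ r - deriv w₂ r) := by
      nlinarith [mul_nonneg (neg_nonneg.2 ha'.le) (by linarith : (0:ℝ) ≤ q * w₁ r ^ (q-1) * (w₁ r - w₂ r) - (w₁ r ^ q - w₂ r ^ q)),
        mul_nonneg (neg_nonneg.2 hb'.le) (by linarith : (0:ℝ) ≤ (w₁ r ^ q - w₂ r ^ q) - q * w₂ r ^ (q-1) * (w₁ r - w₂ r))]
    have hE' : E r = -(2 / r) * (y' r) ^ 2 +
        (q * (w₁ r ^ (q-1) * deriv w₁ r - w₂ r ^ (q-1) * deriv w₂ r) * (w₁ r - w₂ r)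
          - (w₁ r ^ q - w₂ r ^ q) * (deriv w₁ r - deriv w₂ r)) / 2 := by
      simp only [hE_def, hy'_def, hy_def]
      rw [hdd1e, hdd2e]
      ring
    rw [hE']
    linarith [hkey]
  -- endpoint values
  have hy0 : y 0 = 0 := by simp [hy_def, h10, h20]
  have hy'0 : y' 0 = 0 := by simp [hy'_def, h1'0, h2'0]
  have hG0 : G 0 = 0 := by simp [hG_def, hy0, hy'0]
  have hyr₀ : y r₀ = 0 := by simp [hy_def, heq]
  have hGr₀ : 0 ≤ G r₀ := by
    have : G r₀ = (y' r₀) ^ 2 / 2 := by simp [hG_def, hyr₀]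
    rw [this]; positivity
  have hym : 0 < y (r₀ / 2) := by
    have hmIoo : r₀ / 2 ∈ Ioo (0:ℝ) r₀ := ⟨by positivity, by linarith⟩
    exact sub_pos.2 (hgt _ hmIoo)
  have hy'cont : Continuous y' := (hc1.continuous).sub (hc2.continuous)
  have hycont : Continuous y := (hd1.continuous).sub (hd2.continuous)
  clear_value y y' G E
  clear hy_def hy'_def hG_def hE_def hy'd
  -- G is antitone on [0, r₀]
  have hmono : AntitoneOn G (Icc 0 r₀) := by
    apply antitoneOn_of_deriv_nonpos (convex_Icc 0 r₀) hGcont.continuousOn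
    · intro x _
      exact ((hGd x).differentiableAt).differentiableWithinAt
    · intro x hx
      rw [interior_Icc] at hx
      rw [(hGd x).deriv]
      have hle := hEle x hx
      have h2r : 0 < 2 / x := by have := hx.1; positivity
      have := mul_nonneg h2r.le (sq_nonneg (y' x))
      linarith
  -- a point with y' < 0, via MVT
  have hmIoo : r₀ / 2 ∈ Ioo (0:ℝ) r₀ := ⟨by positivity, by linarith⟩
  obtain ⟨c, hc, hceq⟩ := exists_hasDerivAt_eq_slope y y' (by linarith : r₀ / 2 < r₀)
    (hycont.continuousOn) (fun x _ => hyd x)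
  have hy'c : y' c < 0 := by
    rw [hceq, hyr₀]
    apply div_neg_of_neg_of_pos <;> linarith
  have hcIoo : c ∈ Ioo (0:ℝ) r₀ := ⟨by linarith [hc.1, hmIoo.1], hc.2⟩
  -- a small interval around c where y' < 0
  have hopen : IsOpen (y' ⁻¹' Iio 0) := isOpen_Iio.preimage hy'cont
  obtain ⟨ε, hε, hball⟩ := Metric.isOpen_iff.mp hopen c hy'c
  set δ := min (ε / 2) (min (c / 2) ((r₀ - c) / 2)) with hδ
  have hc0 : 0 < c := hcIoo.1
  have hcr : c < r₀ := hcIoo.2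
  have hδpos : 0 < δ := by
    apply lt_min (by positivity)
    exact lt_min (by positivity) (by linarith)
  have hδ1 : δ ≤ ε / 2 := min_le_left _ _
  have hδ2 : δ ≤ c / 2 := (min_le_right _ _).trans (min_le_left _ _)
  have hδ3 : δ ≤ (r₀ - c) / 2 := (min_le_right _ _).trans (min_le_right _ _)
  have hsub : ∀ x ∈ Icc (c - δ) (c + δ), x ∈ Ioo (0:ℝ) r₀ ∧ y' x < 0 := by
    intro x hx
    have hx1 : 0 < x := by have := hx.1; linarith
    have hx2 : x < r₀ := by have := hx.2; linarith
    have hxball : x ∈ Metric.ball c ε := by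
      rw [Metric.mem_ball, Real.dist_eq, abs_sub_lt_iff]
      constructor <;> [skip; skip] <;> cases hx with
      | intro h1 h2 => linarith
    exact ⟨⟨hx1, hx2⟩, hball hxball⟩
  have hstrict : StrictAntiOn G (Icc (c - δ) (c + δ)) := by
    apply strictAntiOn_of_deriv_neg (convex_Icc _ _) hGcont.continuousOn
    intro x hx
    rw [interior_Icc] at hx
    obtain ⟨hxIoo, hxy'⟩ := hsub x (Ioo_subset_Icc_self hx)
    rw [(hGd x).deriv]
    have hle := hEle x hxIoo
    have hx0 : 0 < x := hxIoo.1
    have hsq : 0 < (y' x) ^ 2 := pow_two_pos_of_ne_zero hxy'.ne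
    have : -(2 / x) * (y' x) ^ 2 < 0 := by
      have h2x : 0 < 2 / x := by positivity
      nlinarith
    linarith
  have hlt : G (c + δ) < G (c - δ) := by
    apply hstrict
    · exact ⟨le_rfl, by linarith⟩
    · exact ⟨by linarith, le_rfl⟩
    · linarith
  have e1 : G r₀ ≤ G (c + δ) :=
    hmono ⟨by linarith, by linarith⟩ ⟨by linarith, le_rfl⟩ (by linarith)
  have e2 : G (c - δ) ≤ G 0 :=
    hmono ⟨le_rfl, by linarith⟩ ⟨by linarith, by linarith⟩ (by linarith)
  linarith
end
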